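/- Suppose R : R → SO(3) satisfies Ṙ = R Ω̂ for a curve Ω : R → R^3, r, v ∈ S^2, α > 0, θ ∈ (0, π/2), and r^T R(t)^T v < cos θ along the trajectory. Let B(t) = 1 − (1/α) ln((cos θ − r^T R^T v)/(1 + cos θ)). Then dB/dt = e_{R_B} · Ω, where e_{R_B} = ((R^T v) × r)/(α (r^T R^T v − cos θ)). -/

import Mathlib

open Matrix

noncomputable section

attribute [local instance] Matrix.frobeniusNormedAddCommGroup Matrix.frobeniusNormedSpace

/-- The hat map sending `x ∈ ℝ³` to the skew-symmetric matrix `x̂` with `x̂ y = x × y`. -/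
def hat (x : Fin 3 → ℝ) : Matrix (Fin 3) (Fin 3) ℝ :=
  !![0, -x 2, x 1; x 2, 0, -x 0; -x 1, x 0, 0]

/-- The vee map, inverse of the hat map on skew-symmetric matrices. -/
def vee (A : Matrix (Fin 3) (Fin 3) ℝ) : Fin 3 → ℝ :=
  ![A 2 1, A 0 2, A 1 0]

/-!
Along the flow, `d/dt (rᵀ Rᵀ v) = rᵀ (R Ω̂)ᵀ v = -r ⬝ (Ω × Rᵀ v)`, and the cyclic symmetry of the
triple product turns this into `-((Rᵀ v) × r) ⬝ Ω`. The chain rule through the logarithm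
contributes the factor `1 / (α (cos θ - rᵀ Rᵀ v))`.
-/

theorem hat_transpose (ω : Fin 3 → ℝ) : (hat ω)ᵀ = -hat ω := by
  ext i j
  fin_cases i <;> fin_cases j <;> simp [hat]

theorem hat_mulVec (ω u : Fin 3 → ℝ) : hat ω *ᵥ u = ω ⨯₃ u := by
  ext i
  fin_cases i <;> simp only [hat, cross_apply, mulVec, dotProduct, Fin.sum_univ_three, of_apply,
    cons_val', cons_val_fin_one, cons_val_zero, cons_val_one, cons_val, Fin.isValue,
    Fin.zero_eta, Fin.mk_one, Fin.reduceFinMk] <;> ring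

theorem dotProduct_transpose_mul_hat_mulVec (M : Matrix (Fin 3) (Fin 3) ℝ) (ω r v : Fin 3 → ℝ) :
    r ⬝ᵥ ((M * hat ω)ᵀ *ᵥ v) = -((Mᵀ *ᵥ v) ⨯₃ r ⬝ᵥ ω) := by
  rw [transpose_mul, ← mulVec_mulVec, hat_transpose, neg_mulVec, hat_mulVec, dotProduct_neg,
    triple_product_permutation, dotProduct_comm]

theorem HasDerivAt.dotProduct_transpose_mulVec {n : Type*} [Fintype n]
    {R : ℝ → Matrix n n ℝ} {R' : Matrix n n ℝ} {t : ℝ} (hR : HasDerivAt R R' t) (r v : n → ℝ) :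
    HasDerivAt (fun s => r ⬝ᵥ ((R s)ᵀ *ᵥ v)) (r ⬝ᵥ (R'ᵀ *ᵥ v)) t :=
  let L : Matrix n n ℝ →ₗ[ℝ] ℝ :=
    { toFun M := r ⬝ᵥ (Mᵀ *ᵥ v)
      map_add' M N := by simp only [transpose_add, add_mulVec, dotProduct_add]
      map_smul' c M := by simp [transpose_smul, smul_mulVec, dotProduct_smul] }
  L.toContinuousLinearMap.hasFDerivAt.comp_hasDerivAt t hR

def logBarrier (α c x : ℝ) : ℝ :=
  1 - 1 / α * Real.log ((c - x) / (1 + c))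

theorem hasDerivAt_logBarrier {α c x : ℝ} (hx : x ≠ c) (hc : 1 + c ≠ 0) :
    HasDerivAt (logBarrier α c) (1 / (α * (c - x))) x := by
  have hcx : c - x ≠ 0 := sub_ne_zero.mpr hx.symm
  have hlog := (((hasDerivAt_id' x).const_sub c).div_const (1 + c)).log (div_ne_zero hcx hc)
  refine ((hlog.const_mul (1 / α)).const_sub 1).congr_deriv ?_
  field_simp

theorem deriv_B_general (r v : Fin 3 → ℝ)
    (α θ : ℝ) (hθ : θ ∈ Set.Ioo 0 (Real.pi / 2))
    (R : ℝ → Matrix (Fin 3) (Fin 3) ℝ) (Ω : ℝ → Fin 3 → ℝ)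
    (hkin : ∀ t, HasDerivAt R (R t * hat (Ω t)) t)
    (hcon : ∀ t, r ⬝ᵥ ((R t)ᵀ *ᵥ v) < Real.cos θ) (t : ℝ) :
    HasDerivAt
      (fun s => 1 - (1 / α) * Real.log
        ((Real.cos θ - r ⬝ᵥ ((R s)ᵀ *ᵥ v)) / (1 + Real.cos θ)))
      (((1 / (α * (r ⬝ᵥ ((R t)ᵀ *ᵥ v) - Real.cos θ))) •
        crossProduct ((R t)ᵀ *ᵥ v) r) ⬝ᵥ Ω t) t := by
  have hcos : 0 < Real.cos θ :=
    Real.cos_pos_of_mem_Ioo ⟨by linarith [hθ.1, Real.pi_pos], hθ.2⟩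
  have hB := (hasDerivAt_logBarrier (α := α) (hcon t).ne (by linarith)).comp t
    ((hkin t).dotProduct_transpose_mulVec r v)
  rw [dotProduct_transpose_mul_hat_mulVec] at hB
  refine hB.congr_deriv ?_
  rw [smul_dotProduct, smul_eq_mul, ← neg_sub (Real.cos θ), mul_neg α, div_neg, neg_mul, mul_neg]

theorem deriv_B (r v : Fin 3 → ℝ) (hr : r ⬝ᵥ r = 1) (hv : v ⬝ᵥ v = 1)
    (α θ : ℝ) (hα : 0 < α) (hθ : θ ∈ Set.Ioo 0 (Real.pi / 2))
    (R : ℝ → Matrix (Fin 3) (Fin 3) ℝ) (Ω : ℝ → Fin 3 → ℝ)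
    (hSO : ∀ t, (R t)ᵀ * R t = 1 ∧ (R t).det = 1)
    (hkin : ∀ t, HasDerivAt R (R t * hat (Ω t)) t)
    (hcon : ∀ t, r ⬝ᵥ ((R t)ᵀ *ᵥ v) < Real.cos θ) (t : ℝ) :
    HasDerivAt
      (fun s => 1 - (1 / α) * Real.log
        ((Real.cos θ - r ⬝ᵥ ((R s)ᵀ *ᵥ v)) / (1 + Real.cos θ)))
      (((1 / (α * (r ⬝ᵥ ((R t)ᵀ *ᵥ v) - Real.cos θ))) •
        crossProduct ((R t)ᵀ *ᵥ v) r) ⬝ᵥ Ω t) t :=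
  deriv_B_general r v α θ hθ R Ω hkin hcon t
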